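/- arXiv:1109.1619 — 5 statements merged into one kernel-verified Lean document; each statement's English description precedes it below -/
import Mathlib

section
/- Let K and L be nonempty compact convex sets in ℝⁿ (n ≥ 2). Suppose that for every unit vector u ∈ ℝⁿ, the orthogonal projection L_u of L onto the hyperplane u^⊥ contains a translate of the corresponding projection K_u. Then there exists x ∈ ℝⁿ such that K + x ⊆ (n/(n-1))·L. -/
open Set MeasureTheory Pointwise

noncomputable def projSet {n : ℕ} (u : EuclideanSpace ℝ (Fin n))
    (K : Set (EuclideanSpace ℝ (Fin n))) : Set (EuclideanSpace ℝ (Fin n)) :=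
  (fun x => (Submodule.orthogonalProjectionOnto (ℝ ∙ u)ᗮ x : EuclideanSpace ℝ (Fin n))) '' K

/-!
Write `h_S` for the support function of `S`. If `L_u ⊇ K_u + w`, then
`h_K y + ⟪w, y⟫ ≤ h_L y` for `y ⊥ u`; since any `n` vectors of sum zero lie in a common
hyperplane, this gives `∑ h_K (z i) ≤ ∑ h_L (z i)` for them. For `n + 1` vectors of sum zero,
`z i = ∑_{j ≠ i} (a • z i + b • z j)` with `a = n / (n² - 1)`, `b = 1 / (n² - 1)`, and for each
`j` the `n` vectors `a • z i + b • z j`, `i ≠ j`, again sum to zero; subadditivity then gives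
`∑ h_K (z i) ≤ n / (n - 1) * ∑ h_L (z i)`. A Carathéodory-type splitting extends this to
balanced families of any size, so `n / (n - 1) * h_L - h_K` is nonnegative on balanced
families, and by Hahn–Banach it dominates a linear functional `⟪x, ·⟫`. Thus
`h_{K + x} ≤ h_{(n / (n - 1)) • L}`, and `K + x ⊆ (n / (n - 1)) • L` by separation.
-/

open RealInnerProductSpace
open scoped Finset

section SupportFunction

variable {E : Type*} [NormedAddCommGroup E] [InnerProductSpace ℝ E] {S : Set E}

noncomputable def supportFun (S : Set E) (v : E) : ℝ := sSup ((⟪·, v⟫) '' S)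

lemma bddAbove_inner_image (hS : IsCompact S) (v : E) : BddAbove ((⟪·, v⟫) '' S) :=
  (hS.image (continuous_id.inner continuous_const)).bddAbove

lemma inner_le_supportFun (hS : IsCompact S) {k : E} (hk : k ∈ S) (v : E) :
    ⟪k, v⟫ ≤ supportFun S v :=
  le_csSup (bddAbove_inner_image hS v) ⟨k, hk, rfl⟩

lemma supportFun_le (hS : S.Nonempty) {v : E} {t : ℝ} (h : ∀ k ∈ S, ⟪k, v⟫ ≤ t) :
    supportFun S v ≤ t :=
  csSup_le (hS.image _) (forall_mem_image.2 h)

lemma supportFun_zero (hS : S.Nonempty) : supportFun S 0 = 0 := by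
  simp [supportFun, hS.image_const]

lemma supportFun_add_le (hne : S.Nonempty) (hS : IsCompact S) (v w : E) :
    supportFun S (v + w) ≤ supportFun S v + supportFun S w :=
  supportFun_le hne fun k hk => by
    rw [inner_add_right]
    exact add_le_add (inner_le_supportFun hS hk v) (inner_le_supportFun hS hk w)

lemma supportFun_sum_le (hne : S.Nonempty) (hS : IsCompact S) {ι : Type*} (s : Finset ι)
    (z : ι → E) : supportFun S (∑ i ∈ s, z i) ≤ ∑ i ∈ s, supportFun S (z i) :=
  Finset.le_sum_of_subadditive _ (supportFun_zero hne).le (supportFun_add_le hne hS) s z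

lemma supportFun_smul {r : ℝ} (hr : 0 ≤ r) (v : E) :
    supportFun S (r • v) = r * supportFun S v := by
  rw [supportFun, supportFun, ← smul_eq_mul, ← Real.sSup_smul_of_nonneg hr, ← image_smul,
    image_image]
  simp only [real_inner_smul_right, smul_eq_mul]

lemma supportFun_smul_set {r : ℝ} (hr : 0 ≤ r) (v : E) :
    supportFun (r • S) v = r * supportFun S v := by
  rw [supportFun, supportFun, ← smul_eq_mul, ← Real.sSup_smul_of_nonneg hr, ← image_smul,
    image_image, ← image_smul, image_image]
  simp only [real_inner_smul_left, smul_eq_mul]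

lemma mem_of_forall_inner_le_supportFun [CompleteSpace E] (hne : S.Nonempty) (hcv : Convex ℝ S)
    (hcl : IsClosed S) {p : E} (h : ∀ v, ⟪p, v⟫ ≤ supportFun S v) : p ∈ S := by
  by_contra hp
  obtain ⟨f, t, hfS, hfp⟩ := geometric_hahn_banach_closed_point hcv hcl hp
  set v := (InnerProductSpace.toDual ℝ E).symm f
  have hv : ∀ x, ⟪x, v⟫ = f x := fun x => by
    rw [real_inner_comm]; exact InnerProductSpace.toDual_symm_apply
  have := (h v).trans (supportFun_le hne fun k hk => (hv k).trans_le (hfS k hk).le)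
  linarith [hv p]

end SupportFunction

section LinearMinorant

variable {E : Type*} [AddCommGroup E] {g : E → ℝ}

def decompositionSums (g : E → ℝ) (v : E) : Set ℝ :=
  {t | ∃ (m : ℕ) (z : Fin m → E), ∑ i, z i = v ∧ ∑ i, g (z i) = t}

lemma apply_mem_decompositionSums (v : E) : g v ∈ decompositionSums g v :=
  ⟨1, fun _ => v, by simp, by simp⟩

lemma decompositionSums_add_subset (v w : E) :
    decompositionSums g v + decompositionSums g w ⊆ decompositionSums g (v + w) := by
  rintro _ ⟨_, ⟨m, y, rfl, rfl⟩, _, ⟨m', y', rfl, rfl⟩, rfl⟩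
  exact ⟨m + m', Fin.append y y', by simp [Fin.sum_univ_add], by simp [Fin.sum_univ_add]⟩

lemma bddBelow_decompositionSums
    (hg : ∀ (m : ℕ) (z : Fin m → E), ∑ i, z i = 0 → 0 ≤ ∑ i, g (z i)) (v : E) :
    BddBelow (decompositionSums g v) := by
  refine ⟨-g (-v), ?_⟩
  rintro _ ⟨m, z, hz, rfl⟩
  have := hg (m + 1) (Fin.snoc z (-v)) (by simp [Fin.sum_univ_castSucc, hz])
  simp only [Fin.sum_univ_castSucc, Fin.snoc_castSucc, Fin.snoc_last] at this
  linarith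

variable [Module ℝ E]

lemma decompositionSums_smul (hg : ∀ r : ℝ, 0 < r → ∀ v, g (r • v) = r * g v) {r : ℝ}
    (hr : 0 < r) (v : E) : decompositionSums g (r • v) = r • decompositionSums g v := by
  ext t
  constructor
  · rintro ⟨m, z, hz, rfl⟩
    refine ⟨∑ i, g (r⁻¹ • z i), ⟨m, fun i => r⁻¹ • z i, ?_, rfl⟩, ?_⟩
    · rw [← Finset.smul_sum, hz, inv_smul_smul₀ hr.ne']
    · simp [Finset.mul_sum, hg r⁻¹ (inv_pos.2 hr), hr.ne']
  · rintro ⟨_, ⟨m, z, rfl, rfl⟩, rfl⟩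
    exact ⟨m, fun i => r • z i, Finset.smul_sum.symm, by simp [Finset.mul_sum, hg r hr]⟩

theorem exists_linearMap_le_of_sum_nonneg (hg_smul : ∀ r : ℝ, 0 < r → ∀ v, g (r • v) = r * g v)
    (hg : ∀ (m : ℕ) (z : Fin m → E), ∑ i, z i = 0 → 0 ≤ ∑ i, g (z i)) :
    ∃ φ : E →ₗ[ℝ] ℝ, ∀ v, φ v ≤ g v := by
  have hne (v : E) : (decompositionSums g v).Nonempty := ⟨_, apply_mem_decompositionSums v⟩
  have hbdd := bddBelow_decompositionSums hg
  -- `N` is the largest sublinear function below `g`; Hahn–Banach puts a linear map below `N`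
  set N : E → ℝ := fun v => sInf (decompositionSums g v)
  have hN_smul (r : ℝ) (hr : 0 < r) (v : E) : N (r • v) = r * N v := by
    simp only [N, decompositionSums_smul hg_smul hr, Real.sInf_smul_of_nonneg hr.le, smul_eq_mul]
  have hN_add (v w : E) : N (v + w) ≤ N v + N w := by
    rw [← csInf_add (hne v) (hbdd v) (hne w) (hbdd w)]
    exact csInf_le_csInf (hbdd _) ((hne v).add (hne w)) (decompositionSums_add_subset v w)
  have hN_zero : N 0 = 0 := by
    have := hN_smul 2 two_pos 0
    rw [smul_zero] at this
    linarith
  obtain ⟨φ, -, hφ⟩ := exists_extension_of_le_sublinear ⟨⊥, 0⟩ N hN_smul hN_add fun x => by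
    simp [(Submodule.mem_bot ℝ).1 x.2, hN_zero]
  exact ⟨φ, fun v => (hφ v).trans (csInf_le (hbdd v) (apply_mem_decompositionSums v))⟩

end LinearMinorant

section Splitting

variable {E : Type*} [AddCommGroup E] [Module ℝ E] [FiniteDimensional ℝ E] {ι : Type*}

lemma exists_nonconstant_relation_of_finrank_succ_lt_card {s : Finset ι} {z : ι → E}
    (hs : Module.finrank ℝ E + 1 < #s) :
    ∃ μ : ι → ℝ, ∑ i ∈ s, μ i • z i = 0 ∧ ∃ i ∈ s, ∃ j ∈ s, μ i ≠ μ j := by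
  -- an affine dependence of the `z i`, i.e. a linear dependence of the `(z i, 1)`
  have hdep : ¬ LinearIndepOn ℝ (fun i => (z i, (1 : ℝ))) (s : Set ι) := fun h => by
    have := h.fintype_card_le_finrank
    simp [Module.finrank_prod] at this
    omega
  obtain ⟨μ, hμ, i, hi, hμi⟩ := by simpa [linearIndepOn_finset_iff] using hdep
  simp only [Prod.ext_iff, Prod.fst_sum, Prod.snd_sum, Prod.fst_zero, Prod.snd_zero] at hμ
  refine ⟨μ, hμ.1, i, hi, ?_⟩
  by_contra! hconst
  have : ∑ j ∈ s, μ j = #s * μ i := by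
    rw [Finset.sum_congr rfl fun j hj => (hconst j hj).symm, Finset.sum_const, nsmul_eq_mul]
  have hs0 : (#s : ℝ) ≠ 0 := by norm_cast; omega
  exact hμi (by simpa [hμ.2, hs0] using this)

lemma exists_unitInterval_weights_of_finrank_succ_lt_card {s : Finset ι} {z : ι → E}
    (hs : Module.finrank ℝ E + 1 < #s) (hz : ∑ i ∈ s, z i = 0) :
    ∃ α : ι → ℝ, (∀ i ∈ s, α i ∈ Icc 0 1) ∧ ∑ i ∈ s, α i • z i = 0 ∧
      (∃ i ∈ s, α i = 0) ∧ ∃ i ∈ s, α i = 1 := by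
  obtain ⟨μ, hμ, i, hi, j, hj, hij⟩ :=
    exists_nonconstant_relation_of_finrank_succ_lt_card (z := z) hs
  have hsne : s.Nonempty := ⟨i, hi⟩
  set μmin := s.inf' hsne μ
  set μmax := s.sup' hsne μ
  have hlt : μmin < μmax := by
    rcases hij.lt_or_gt with h | h
    · exact (Finset.inf'_le μ hi).trans_lt (h.trans_le (Finset.le_sup' μ hj))
    · exact (Finset.inf'_le μ hj).trans_lt (h.trans_le (Finset.le_sup' μ hi))
  obtain ⟨i₀, hi₀, hμi₀⟩ := Finset.exists_mem_eq_inf' hsne μ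
  obtain ⟨i₁, hi₁, hμi₁⟩ := Finset.exists_mem_eq_sup' hsne μ
  refine ⟨fun i => (μ i - μmin) / (μmax - μmin), fun i hi => ⟨?_, ?_⟩, ?_, ⟨i₀, hi₀, ?_⟩,
    ⟨i₁, hi₁, ?_⟩⟩
  · exact div_nonneg (sub_nonneg.2 (Finset.inf'_le μ hi)) (sub_pos.2 hlt).le
  · exact (div_le_one (sub_pos.2 hlt)).2 (sub_le_sub_right (Finset.le_sup' μ hi) _)
  · simp only [div_eq_inv_mul, mul_smul, sub_smul, ← Finset.smul_sum, Finset.sum_sub_distrib,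
      hμ, hz, smul_zero, sub_zero]
  · simp [← hμi₀, μmin]
  · simp [← hμi₁, μmax, div_self (sub_pos.2 hlt).ne']

theorem sum_nonneg_of_forall_card_le_finrank_succ {f : E → ℝ}
    (hf : ∀ r : ℝ, 0 ≤ r → ∀ v, f (r • v) = r * f v)
    (hsmall : ∀ (s : Finset ι) (z : ι → E), #s ≤ Module.finrank ℝ E + 1 → ∑ i ∈ s, z i = 0 →
      0 ≤ ∑ i ∈ s, f (z i))
    (s : Finset ι) (z : ι → E) (hz : ∑ i ∈ s, z i = 0) : 0 ≤ ∑ i ∈ s, f (z i) := by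
  classical
  induction s using Finset.strongInduction generalizing z with
  | H s ih =>
  rcases le_or_gt #s (Module.finrank ℝ E + 1) with hs | hs
  · exact hsmall s z hs hz
  obtain ⟨α, hα, hαz, ⟨i₀, hi₀, hα₀⟩, ⟨i₁, hi₁, hα₁⟩⟩ :=
    exists_unitInterval_weights_of_finrank_succ_lt_card hs hz
  have hf0 (v : E) : f ((0 : ℝ) • v) = 0 := by rw [hf 0 le_rfl, zero_mul]
  -- split `z i = α i • z i + (1 - α i) • z i` into two balanced families with smaller support
  have hsum₁ : ∑ i ∈ s with α i ≠ 0, f (α i • z i) = ∑ i ∈ s, f (α i • z i) :=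
    Finset.sum_filter_of_ne fun i _ h hα => h (by rw [hα, hf0])
  have hsum₂ : ∑ i ∈ s with α i ≠ 1, f ((1 - α i) • z i) = ∑ i ∈ s, f ((1 - α i) • z i) :=
    Finset.sum_filter_of_ne fun i _ h hα => h (by rw [hα, sub_self, hf0])
  have hz₁ : ∑ i ∈ s with α i ≠ 0, α i • z i = 0 :=
    (Finset.sum_filter_of_ne (p := (α · ≠ 0)) fun i _ h hα => h (by rw [hα, zero_smul])).trans hαz
  have hz₂ : ∑ i ∈ s with α i ≠ 1, (1 - α i) • z i = 0 := by
    rw [Finset.sum_filter_of_ne (p := (α · ≠ 1)) fun i _ h hα =>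
      h (by rw [hα, sub_self, zero_smul])]
    simp only [sub_smul, one_smul, Finset.sum_sub_distrib, hz, hαz, sub_zero]
  have h₁ := ih _ (Finset.filter_ssubset.2 ⟨i₀, hi₀, not_not.2 hα₀⟩) _ hz₁
  have h₂ := ih _ (Finset.filter_ssubset.2 ⟨i₁, hi₁, not_not.2 hα₁⟩) _ hz₂
  have hsplit : ∑ i ∈ s, f (z i) = ∑ i ∈ s, f (α i • z i) + ∑ i ∈ s, f ((1 - α i) • z i) := by
    rw [← Finset.sum_add_distrib]
    refine Finset.sum_congr rfl fun i hi => ?_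
    rw [hf _ (hα i hi).1, hf _ (sub_nonneg.2 (hα i hi).2)]
    ring
  rw [hsplit, ← hsum₁, ← hsum₂]
  exact add_nonneg h₁ h₂

end Splitting

theorem sum_supportFun_le_of_card_eq_succ {E ι : Type*} [NormedAddCommGroup E]
    [InnerProductSpace ℝ E] {K L : Set E} (hKne : K.Nonempty)
    (hKcpt : IsCompact K) (hLne : L.Nonempty) (hLcpt : IsCompact L) {n : ℕ} (hn : 2 ≤ n)
    (hplanar : ∀ (t : Finset ι) (y : ι → E), #t = n → ∑ i ∈ t, y i = 0 →
      ∑ i ∈ t, supportFun K (y i) ≤ ∑ i ∈ t, supportFun L (y i))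
    {s : Finset ι} {z : ι → E} (hs : #s = n + 1) (hz : ∑ i ∈ s, z i = 0) :
    ∑ i ∈ s, supportFun K (z i) ≤ n / (n - 1) * ∑ i ∈ s, supportFun L (z i) := by
  classical
  have hn' : (2 : ℝ) ≤ n := by exact_mod_cast hn
  have hcard (i : ι) (hi : i ∈ s) : #(s.erase i) = n := by
    rw [Finset.card_erase_of_mem hi, hs, Nat.add_sub_cancel]
  have herase (i : ι) (hi : i ∈ s) : ∑ j ∈ s.erase i, z j = -z i := by
    rw [Finset.sum_erase_eq_sub hi, hz, zero_sub]
  -- `y i j := a • z i + b • z j` sums to `z i` over `j ≠ i` and to `0` over `i ≠ j`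
  obtain ⟨a, b, ha, hb, hab, hba, hcoef⟩ : ∃ a b : ℝ, 0 ≤ a ∧ 0 ≤ b ∧ n * a - b = 1 ∧
      n * b = a ∧ (n + 1) * a = n / (n - 1) := by
    have hn1 : (n : ℝ) - 1 ≠ 0 := by linarith
    have hn2 : 0 < (n : ℝ) ^ 2 - 1 := by nlinarith
    refine ⟨n / (n ^ 2 - 1), 1 / (n ^ 2 - 1), by positivity, by positivity, ?_, ?_, ?_⟩
    · field_simp
    · field_simp
    · field_simp
      ring
  have hrow (i : ι) (hi : i ∈ s) : ∑ j ∈ s.erase i, (a • z i + b • z j) = z i := by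
    rw [Finset.sum_add_distrib, Finset.sum_const, hcard i hi, ← Finset.smul_sum, herase i hi,
      ← Nat.cast_smul_eq_nsmul ℝ, smul_smul, smul_neg, ← sub_eq_add_neg, ← sub_smul, hab,
      one_smul]
  have hcol (j : ι) (hj : j ∈ s) : ∑ i ∈ s.erase j, (a • z i + b • z j) = 0 := by
    rw [Finset.sum_add_distrib, Finset.sum_const, hcard j hj, ← Finset.smul_sum, herase j hj,
      ← Nat.cast_smul_eq_nsmul ℝ, smul_smul, hba, smul_neg, neg_add_cancel]
  calc ∑ i ∈ s, supportFun K (z i)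
      = ∑ i ∈ s, supportFun K (∑ j ∈ s.erase i, (a • z i + b • z j)) :=
        Finset.sum_congr rfl fun i hi => by rw [hrow i hi]
    _ ≤ ∑ i ∈ s, ∑ j ∈ s.erase i, supportFun K (a • z i + b • z j) :=
        Finset.sum_le_sum fun i _ => supportFun_sum_le hKne hKcpt _ _
    _ = ∑ j ∈ s, ∑ i ∈ s.erase j, supportFun K (a • z i + b • z j) :=
        Finset.sum_comm' fun i j => by simp only [Finset.mem_erase]; tauto
    _ ≤ ∑ j ∈ s, ∑ i ∈ s.erase j, supportFun L (a • z i + b • z j) :=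
        Finset.sum_le_sum fun j hj => hplanar _ _ (hcard j hj) (hcol j hj)
    _ ≤ ∑ j ∈ s, ∑ i ∈ s.erase j, (a * supportFun L (z i) + b * supportFun L (z j)) := by
        gcongr with j _ i _
        refine (supportFun_add_le hLne hLcpt _ _).trans_eq ?_
        rw [supportFun_smul ha, supportFun_smul hb]
    _ = ∑ j ∈ s, a * ∑ i ∈ s, supportFun L (z i) := by
        refine Finset.sum_congr rfl fun j hj => ?_
        rw [Finset.sum_add_distrib, ← Finset.mul_sum, Finset.sum_erase_eq_sub hj,
          Finset.sum_const, hcard j hj, nsmul_eq_mul, ← mul_assoc, hba]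
        ring
    _ = n / (n - 1) * ∑ i ∈ s, supportFun L (z i) := by
        rw [Finset.sum_const, hs, nsmul_eq_mul, ← mul_assoc, ← hcoef]
        push_cast
        ring

lemma exists_norm_eq_one_forall_inner_eq_zero {E : Type*} [NormedAddCommGroup E]
    [InnerProductSpace ℝ E] [FiniteDimensional ℝ E] {S : Submodule ℝ E}
    (hS : Module.finrank ℝ S < Module.finrank ℝ E) : ∃ u : E, ‖u‖ = 1 ∧ ∀ v ∈ S, ⟪u, v⟫ = 0 := by
  have hS_ne_top : S ≠ ⊤ := by
    rintro rfl
    rw [finrank_top] at hS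
    exact lt_irrefl _ hS
  obtain ⟨u, hu, hu0⟩ := Submodule.exists_mem_ne_zero_of_ne_bot
    (mt Submodule.orthogonal_eq_bot_iff.1 hS_ne_top)
  refine ⟨‖u‖⁻¹ • u, norm_smul_inv_norm hu0, fun v hv => ?_⟩
  rw [real_inner_smul_left, Submodule.inner_left_of_mem_orthogonal hv hu, mul_zero]

lemma finrank_span_image_lt_card_of_sum_eq_zero {E ι : Type*} [AddCommGroup E] [Module ℝ E]
    {s : Finset ι} (hs : s.Nonempty) {z : ι → E} (hz : ∑ i ∈ s, z i = 0) :
    Module.finrank ℝ (Submodule.span ℝ (z '' s)) < #s := by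
  have hdep : ¬ LinearIndepOn ℝ z (s : Set ι) := fun h => by
    obtain ⟨i, hi⟩ := hs
    exact one_ne_zero (linearIndepOn_finset_iff.1 h (fun _ => 1) (by simpa using hz) i hi)
  rw [LinearIndepOn, linearIndependent_iff_card_le_finrank_span] at hdep
  rw [Set.image_eq_range]
  simpa [Set.finrank] using hdep

section Euclidean

variable {n : ℕ} {K L : Set (EuclideanSpace ℝ (Fin n))} {ι : Type*}

def ShadowsCover (K L : Set (EuclideanSpace ℝ (Fin n))) : Prop :=
  ∀ u : EuclideanSpace ℝ (Fin n), ‖u‖ = 1 →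
    ∃ w ∈ (ℝ ∙ u)ᗮ, (fun y => y + w) '' projSet u K ⊆ projSet u L

lemma supportFun_add_inner_le_of_image_projSet_subset (hKne : K.Nonempty) (hLcpt : IsCompact L)
    {u w : EuclideanSpace ℝ (Fin n)} (h : (fun y => y + w) '' projSet u K ⊆ projSet u L)
    {y : EuclideanSpace ℝ (Fin n)} (hy : y ∈ (ℝ ∙ u)ᗮ) :
    supportFun K y + ⟪w, y⟫ ≤ supportFun L y := by
  have hproj (x : EuclideanSpace ℝ (Fin n)) :
      ⟪((ℝ ∙ u)ᗮ.orthogonalProjectionOnto x : EuclideanSpace ℝ (Fin n)), y⟫ = ⟪x, y⟫ :=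
    Submodule.inner_orthogonalProjectionOnto_eq_of_mem_right (⟨y, hy⟩ : (ℝ ∙ u)ᗮ) x
  rw [← le_sub_iff_add_le]
  refine supportFun_le hKne fun k hk => ?_
  obtain ⟨l, hl, hlk⟩ := h ⟨_, ⟨k, hk, rfl⟩, rfl⟩
  have := congrArg (⟪·, y⟫) hlk
  simp only [inner_add_left, hproj] at this
  linarith [inner_le_supportFun hLcpt hl y]

lemma sum_supportFun_le_of_card_le (hKne : K.Nonempty) (hLcpt : IsCompact L)
    (hcov : ShadowsCover K L) {s : Finset ι} {z : ι → EuclideanSpace ℝ (Fin n)} (hs : #s ≤ n)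
    (hz : ∑ i ∈ s, z i = 0) : ∑ i ∈ s, supportFun K (z i) ≤ ∑ i ∈ s, supportFun L (z i) := by
  rcases s.eq_empty_or_nonempty with rfl | hsne
  · simp
  obtain ⟨u, hu, hperp⟩ := exists_norm_eq_one_forall_inner_eq_zero
    (S := Submodule.span ℝ (z '' s)) (by
      rw [finrank_euclideanSpace_fin]
      exact (finrank_span_image_lt_card_of_sum_eq_zero hsne hz).trans_le hs)
  obtain ⟨w, -, hw⟩ := hcov u hu
  have hzu (i : ι) (hi : i ∈ s) : z i ∈ (ℝ ∙ u)ᗮ :=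
    Submodule.mem_orthogonal_singleton_iff_inner_right.2
      (hperp _ (Submodule.subset_span ⟨i, hi, rfl⟩))
  calc ∑ i ∈ s, supportFun K (z i) ≤ ∑ i ∈ s, (supportFun L (z i) - ⟪w, z i⟫) :=
        Finset.sum_le_sum fun i hi => le_sub_iff_add_le.2
          (supportFun_add_inner_le_of_image_projSet_subset hKne hLcpt hw (hzu i hi))
    _ = ∑ i ∈ s, supportFun L (z i) := by
        rw [Finset.sum_sub_distrib, ← inner_sum, hz, inner_zero_right, sub_zero]

theorem sum_supportFun_le_of_sum_eq_zero (hn : 2 ≤ n) (hKne : K.Nonempty) (hKcpt : IsCompact K)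
    (hLne : L.Nonempty) (hLcpt : IsCompact L) (hcov : ShadowsCover K L) (s : Finset ι)
    (z : ι → EuclideanSpace ℝ (Fin n)) (hz : ∑ i ∈ s, z i = 0) :
    ∑ i ∈ s, supportFun K (z i) ≤ n / (n - 1) * ∑ i ∈ s, supportFun L (z i) := by
  have hn' : (2 : ℝ) ≤ n := by exact_mod_cast hn
  suffices 0 ≤ ∑ i ∈ s, (n / (n - 1) * supportFun L (z i) - supportFun K (z i)) by
    rwa [Finset.sum_sub_distrib, ← Finset.mul_sum, sub_nonneg] at this
  refine sum_nonneg_of_forall_card_le_finrank_succ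
    (f := fun v => n / (n - 1) * supportFun L v - supportFun K v)
    (fun r hr v => by simp only [supportFun_smul hr]; ring) (fun t y ht hy => ?_) s z hz
  rw [Finset.sum_sub_distrib, ← Finset.mul_sum, sub_nonneg]
  rw [finrank_euclideanSpace_fin] at ht
  rcases ht.lt_or_eq with ht | ht
  · have hL : 0 ≤ ∑ i ∈ t, supportFun L (y i) := by
      simpa [hy, supportFun_zero hLne] using supportFun_sum_le hLne hLcpt t y
    have hc : 1 ≤ (n : ℝ) / (n - 1) := by rw [le_div_iff₀ (by linarith)]; linarith
    calc _ ≤ ∑ i ∈ t, supportFun L (y i) :=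
          sum_supportFun_le_of_card_le hKne hLcpt hcov (Nat.lt_succ_iff.1 ht) hy
      _ ≤ _ := le_mul_of_one_le_left hL hc
  · exact sum_supportFun_le_of_card_eq_succ hKne hKcpt hLne hLcpt hn
      (fun t y ht hy => sum_supportFun_le_of_card_le hKne hLcpt hcov ht.le hy) ht hy

end Euclidean

theorem shadow_covering_containment_general {n : ℕ} (hn : 2 ≤ n)
    (K L : Set (EuclideanSpace ℝ (Fin n)))
    (hKne : K.Nonempty) (hKcpt : IsCompact K)
    (hLne : L.Nonempty) (hLcpt : IsCompact L) (hLcv : Convex ℝ L)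
    (hcov : ∀ u : EuclideanSpace ℝ (Fin n), ‖u‖ = 1 →
      ∃ w ∈ (ℝ ∙ u)ᗮ, (fun y => y + w) '' projSet u K ⊆ projSet u L) :
    ∃ x : EuclideanSpace ℝ (Fin n),
      (fun y => y + x) '' K ⊆ ((n : ℝ) / ((n : ℝ) - 1)) • L := by
  have hn' : (2 : ℝ) ≤ n := by exact_mod_cast hn
  set c : ℝ := n / (n - 1)
  have hc : 0 ≤ c := div_nonneg n.cast_nonneg (by linarith)
  obtain ⟨φ, hφ⟩ :=
    exists_linearMap_le_of_sum_nonneg (g := fun v => c * supportFun L v - supportFun K v)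
    (fun r hr v => by simp only [supportFun_smul hr.le]; ring) fun m z hz => by
      simpa [Finset.sum_sub_distrib, ← Finset.mul_sum] using
        sum_supportFun_le_of_sum_eq_zero hn hKne hKcpt hLne hLcpt hcov Finset.univ z hz
  set x := (InnerProductSpace.toDual ℝ _).symm (LinearMap.toContinuousLinearMap φ)
  refine ⟨x, ?_⟩
  rintro _ ⟨k, hk, rfl⟩
  refine mem_of_forall_inner_le_supportFun hLne.smul_set (hLcv.smul c) (hLcpt.smul c).isClosed
    fun v => ?_
  have hx : ⟪x, v⟫ = φ v := InnerProductSpace.toDual_symm_apply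
  rw [supportFun_smul_set hc, inner_add_left, hx]
  linarith [inner_le_supportFun hKcpt hk v, hφ v]

/-- If every hyperplane shadow of `L` contains a translate of the
corresponding shadow of `K`, then a translate of `K` lies in `(n/(n-1)) • L`. -/
theorem shadow_covering_containment {n : ℕ} (hn : 2 ≤ n)
    (K L : Set (EuclideanSpace ℝ (Fin n)))
    (hKne : K.Nonempty) (hKcpt : IsCompact K) (hKcv : Convex ℝ K)
    (hLne : L.Nonempty) (hLcpt : IsCompact L) (hLcv : Convex ℝ L)
    (hcov : ∀ u : EuclideanSpace ℝ (Fin n), ‖u‖ = 1 →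
      ∃ w ∈ (ℝ ∙ u)ᗮ, (fun y => y + w) '' projSet u K ⊆ projSet u L) :
    ∃ x : EuclideanSpace ℝ (Fin n),
      (fun y => y + x) '' K ⊆ ((n : ℝ) / ((n : ℝ) - 1)) • L :=
  shadow_covering_containment_general hn K L hKne hKcpt hLne hLcpt hLcv hcov
end

section
/- Let K be a nonempty compact convex set in ℝⁿ (n ≥ 1). Then the set −n·K = {−n·x : x ∈ K} contains a translate of K; that is, there exists v ∈ ℝⁿ with K + v ⊆ −n·K. -/
/-!
Let `d = dim E` and, for `x ∈ K`, let `K_x` be the image of `K` under the homothety with centre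
`x` and ratio `d / (d + 1)`. For any `m ≤ d + 1` points of `K` the centroid `g` of the points lies
in each `K_x` with `x` among them, because `((d + 1) g - x) / d` is a convex combination of those
points. So by Helly's theorem some `c` lies in every `K_x`: for each `x ∈ K` there is `y ∈ K` with
`x + d y = (d + 1) c`, i.e. `x - (d + 1) c = -d y ∈ -d K`.
-/

open Set MeasureTheory Pointwise

lemma AffineMap.homothety_div_add_one_eq_iff {E : Type*} [AddCommGroup E] [Module ℝ E] {d : ℝ}
    (hd : d + 1 ≠ 0) {x y c : E} :
    homothety x (d / (d + 1)) y = c ↔ x + d • y = (d + 1) • c := by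
  have h_scaled : (d + 1) • homothety x (d / (d + 1)) y = x + d • y := by
    rw [homothety_apply, vsub_eq_sub, vadd_eq_add, smul_add, smul_smul, mul_div_cancel₀ _ hd]
    module
  rw [← smul_right_inj hd, h_scaled]

open Finset in
lemma Convex.inv_card_smul_sum_mem_image_homothety {E ι : Type*} [AddCommGroup E] [Module ℝ E]
    [DecidableEq ι] {K : Set E} (hK : Convex ℝ K) {I : Finset ι} {p : ι → E}
    (hp : ∀ j ∈ I, p j ∈ K) {d : ℝ} (hd : 0 < d) (hI : (#I : ℝ) ≤ d + 1) {x : ι} (hx : x ∈ I) :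
    (#I : ℝ)⁻¹ • ∑ j ∈ I, p j ∈ AffineMap.homothety (p x) (d / (d + 1)) '' K := by
  have hm : (0 : ℝ) < #I := by exact_mod_cast card_pos.mpr ⟨x, hx⟩
  set w : ι → ℝ := fun j => d + 1 - if j = x then (#I : ℝ) else 0
  have hw_nonneg : ∀ j ∈ I, 0 ≤ w j := fun j _ => by
    simp only [w]; split_ifs <;> linarith
  have hw_sum : ∑ j ∈ I, w j = #I * d := by
    simp only [w, sum_sub_distrib, sum_const, nsmul_eq_mul, sum_ite_eq', if_pos hx]; ring
  have hw_smul_sum : ∑ j ∈ I, w j • p j = (d + 1) • ∑ j ∈ I, p j - (#I : ℝ) • p x := by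
    simp only [w, sub_smul, ite_smul, zero_smul, sum_sub_distrib, smul_sum, sum_ite_eq',
      if_pos hx]
  refine ⟨I.centerMass w p, hK.centerMass_mem hw_nonneg (by rw [hw_sum]; positivity) hp, ?_⟩
  rw [AffineMap.homothety_div_add_one_eq_iff (by positivity), centerMass, hw_sum, hw_smul_sum]
  match_scalars
  · field_simp
    ring
  · field_simp

open Module

variable {E : Type*} [AddCommGroup E] [Module ℝ E] [TopologicalSpace E] [IsTopologicalAddGroup E]
  [ContinuousSMul ℝ E] [T2Space E] [FiniteDimensional ℝ E]

theorem Convex.exists_forall_mem_image_homothety {K : Set E} (hK : Convex ℝ K)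
    (hKc : IsCompact K) (hE : 0 < finrank ℝ E) :
    ∃ c : E, ∀ x ∈ K,
      c ∈ AffineMap.homothety x ((finrank ℝ E : ℝ) / (finrank ℝ E + 1)) '' K := by
  classical
  obtain ⟨c, hc⟩ := Convex.helly_theorem_compact' (𝕜 := ℝ)
    (F := fun x : K => AffineMap.homothety (x : E) ((finrank ℝ E : ℝ) / (finrank ℝ E + 1)) '' K)
    (fun _ => hK.affine_image _) (fun _ => hKc.image (AffineMap.homothety_continuous _ _))
    (fun I hI => ⟨_, mem_iInter₂.mpr fun _ hx =>
      hK.inv_card_smul_sum_mem_image_homothety (p := Subtype.val) (fun j _ => j.2)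
        (by positivity) (by exact_mod_cast hI) hx⟩)
  exact ⟨c, fun x hx => mem_iInter.mp hc ⟨x, hx⟩⟩

theorem Convex.exists_image_add_subset_neg_finrank_smul {K : Set E} (hK : Convex ℝ K)
    (hKc : IsCompact K) : ∃ v : E, (· + v) '' K ⊆ (-(finrank ℝ E : ℝ)) • K := by
  rcases (finrank ℝ E).eq_zero_or_pos with hE | hE
  · have : Subsingleton E := finrank_zero_iff.mp hE
    exact ⟨0, fun _ ⟨x, hx, _⟩ => ⟨x, hx, Subsingleton.elim _ _⟩⟩
  obtain ⟨c, hc⟩ := hK.exists_forall_mem_image_homothety hKc hE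
  refine ⟨-((finrank ℝ E + 1 : ℝ) • c), ?_⟩
  rintro _ ⟨x, hx, rfl⟩
  obtain ⟨y, hy, hxy⟩ := hc x hx
  rw [AffineMap.homothety_div_add_one_eq_iff (by positivity)] at hxy
  refine ⟨y, hy, ?_⟩
  rw [← hxy]
  module

theorem translate_into_neg_n_smul_general {n : ℕ}
    (K : Set (EuclideanSpace ℝ (Fin n)))
    (hKcpt : IsCompact K) (hKcv : Convex ℝ K) :
    ∃ v : EuclideanSpace ℝ (Fin n), (fun y => y + v) '' K ⊆ (-(n : ℝ)) • K := by
  simpa only [finrank_euclideanSpace_fin] using hKcv.exists_image_add_subset_neg_finrank_smul hKcpt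

/-- `-n·K` contains a translate of `K`. -/
theorem translate_into_neg_n_smul {n : ℕ} (hn : 1 ≤ n)
    (K : Set (EuclideanSpace ℝ (Fin n)))
    (hKne : K.Nonempty) (hKcpt : IsCompact K) (hKcv : Convex ℝ K) :
    ∃ v : EuclideanSpace ℝ (Fin n), (fun y => y + v) '' K ⊆ (-(n : ℝ)) • K :=
  translate_into_neg_n_smul_general K hKcpt hKcv
end

section
/- Let K and L be nonempty compact convex sets in ℝⁿ such that for every unit vector u ∈ ℝⁿ, the orthogonal projection L_u contains a translate of K_u. Then for every t ∈ [0,1], the Minkowski combination M = (1−t)·K + t·L also satisfies: for every unit vector u, L_u contains a translate of M_u. -/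
open Set MeasureTheory Pointwise

/-! Since `A + w ⊆ B`, the set `(1 - t) • A + t • B` shifted by `(1 - t) • w` lies in
`(1 - t) • B + t • B = B` by convexity of `B`; projections are linear, so they commute with
Minkowski combinations and the shadow of `(1 - t) • K + t • L` is the same combination of the
shadows of `K` and `L`. -/

section

variable {𝕜 E F : Type*} [Field 𝕜] [LinearOrder 𝕜] [IsStrictOrderedRing 𝕜]
  [AddCommGroup E] [Module 𝕜 E] [AddCommGroup F] [Module 𝕜 F]

theorem Convex.image_add_combo_subset {A B : Set E} (hB : Convex 𝕜 B) {w : E}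
    (hAB : (· + w) '' A ⊆ B) {t : 𝕜} (ht : t ∈ Icc 0 1) :
    (· + (1 - t) • w) '' ((1 - t) • A + t • B) ⊆ B := by
  rintro _ ⟨_, ⟨_, ⟨a, ha, rfl⟩, _, ⟨b, hb, rfl⟩, rfl⟩, rfl⟩
  have hcombo : (1 - t) • (a + w) + t • b ∈ B :=
    hB (hAB ⟨a, ha, rfl⟩) hb (sub_nonneg.2 ht.2) ht.1 (sub_add_cancel 1 t)
  convert hcombo using 1
  module

theorem Convex.image_add_linearMap_combo_subset (f : E →ₗ[𝕜] F) {K L : Set E}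
    (hL : Convex 𝕜 L) {w : F} (hKL : (· + w) '' (f '' K) ⊆ f '' L) {t : 𝕜} (ht : t ∈ Icc 0 1) :
    (· + (1 - t) • w) '' (f '' ((1 - t) • K + t • L)) ⊆ f '' L := by
  rw [image_add, image_smul_set, image_smul_set]
  exact (hL.linear_image f).image_add_combo_subset hKL ht

end

theorem projSet_eq_image_starProjection {n : ℕ} (u : EuclideanSpace ℝ (Fin n))
    (K : Set (EuclideanSpace ℝ (Fin n))) :
    projSet u K = (ℝ ∙ u)ᗮ.starProjection '' K :=
  rfl

theorem shadow_covering_minkowski_interpolation_general {n : ℕ}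
    (K L : Set (EuclideanSpace ℝ (Fin n)))
    (hLcv : Convex ℝ L)
    (hcov : ∀ u : EuclideanSpace ℝ (Fin n), ‖u‖ = 1 →
      ∃ w ∈ (ℝ ∙ u)ᗮ, (fun y => y + w) '' projSet u K ⊆ projSet u L) :
    ∀ t ∈ Set.Icc (0 : ℝ) 1, ∀ u : EuclideanSpace ℝ (Fin n), ‖u‖ = 1 →
      ∃ w ∈ (ℝ ∙ u)ᗮ,
        (fun y => y + w) '' projSet u ((1 - t) • K + t • L) ⊆ projSet u L := by
  intro t ht u hu
  obtain ⟨w, hw, hKL⟩ := hcov u hu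
  refine ⟨(1 - t) • w, Submodule.smul_mem _ _ hw, ?_⟩
  simp only [projSet_eq_image_starProjection] at hKL ⊢
  exact hLcv.image_add_linearMap_combo_subset (ℝ ∙ u)ᗮ.starProjection.toLinearMap hKL ht

/-- the shadow covering condition is preserved under Minkowski
interpolation `(1-t)K + tL`. -/
theorem shadow_covering_minkowski_interpolation {n : ℕ}
    (K L : Set (EuclideanSpace ℝ (Fin n)))
    (hKne : K.Nonempty) (hKcpt : IsCompact K) (hKcv : Convex ℝ K)
    (hLne : L.Nonempty) (hLcpt : IsCompact L) (hLcv : Convex ℝ L)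
    (hcov : ∀ u : EuclideanSpace ℝ (Fin n), ‖u‖ = 1 →
      ∃ w ∈ (ℝ ∙ u)ᗮ, (fun y => y + w) '' projSet u K ⊆ projSet u L) :
    ∀ t ∈ Set.Icc (0 : ℝ) 1, ∀ u : EuclideanSpace ℝ (Fin n), ‖u‖ = 1 →
      ∃ w ∈ (ℝ ∙ u)ᗮ,
        (fun y => y + w) '' projSet u ((1 - t) • K + t • L) ⊆ projSet u L :=
  shadow_covering_minkowski_interpolation_general K L hLcv hcov
end

section
/- Let n ≥ 2. Let Ξ be the n-dimensional simplex in ℝⁿ with vertices at the origin o and the standard basis vectors e₁, …, eₙ, let p = (1/(n−1), …, 1/(n−1)) ∈ ℝⁿ, and let D be the cap body given by the convex hull of Ξ ∪ {p}. Let K be a nonempty compact convex set in ℝⁿ such that for every unit vector u, the orthogonal projection Ξ_u contains a translate of K_u. Then there exists x ∈ ℝⁿ such that K + x ⊆ D ⊆ (n/(n−1))·Ξ. -/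
open Set MeasureTheory Pointwise

/-!
Only the `n` shadows along the coordinate axes are needed. The shadow of `Ξ` along `eᵢ` is the
`(n-1)`-simplex in the other coordinates, so a translate of `K` in it bounds, for every `j ≠ i`,
the coordinate `j` of `K` from below by `-wᵢⱼ`, and `∑_{j ≠ i} (k_j + wᵢⱼ) ≤ 1`. Shifting the
coordinate `j` by `minᵢ wᵢⱼ` therefore moves `K` into the cap region
`{z ≥ 0 | ∑_{j ≠ i} z_j ≤ 1 for all i}`. A point `z` of this region with `s = ∑ z_j > 1` has
`z_j ≥ s - 1` for all `j`, hence is `(n-1)(s-1) • p` plus a point of `(1 - (n-1)(s-1)) • Ξ`,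
i.e. lies in `D = conv(Ξ ∪ {p})`.
-/

theorem Convex.sum_smul_mem_of_zero_mem {𝕜 E ι : Type*} [Field 𝕜] [LinearOrder 𝕜]
    [IsStrictOrderedRing 𝕜] [AddCommGroup E] [Module 𝕜 E] {C : Set E} (hC : Convex 𝕜 C)
    (h0 : (0 : E) ∈ C) {s : Finset ι} {w : ι → 𝕜} {v : ι → E} (hw₀ : ∀ i ∈ s, 0 ≤ w i)
    (hw₁ : ∑ i ∈ s, w i ≤ 1) (hv : ∀ i ∈ s, v i ∈ C) : ∑ i ∈ s, w i • v i ∈ C := by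
  classical
  simpa using hC.sum_mem (t := s.insertNone) (w := fun o => o.elim (1 - ∑ i ∈ s, w i) w)
    (z := fun o => o.elim 0 v)
    (by rintro (_ | i) hi
        · simpa using hw₁
        · exact hw₀ i (Finset.some_mem_insertNone.1 hi))
    (by simp)
    (by rintro (_ | i) hi
        · exact h0
        · exact hv i (Finset.some_mem_insertNone.1 hi))

section CornerSimplex

variable {n : ℕ}

theorem orthogonalProjectionOnto_orthogonal_single_apply_of_ne {i j : Fin n} (hji : j ≠ i)
    (x : EuclideanSpace ℝ (Fin n)) :
    ((ℝ ∙ EuclideanSpace.single i (1 : ℝ))ᗮ.orthogonalProjectionOnto x :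
      EuclideanSpace ℝ (Fin n)) j = x j := by
  simp [Submodule.orthogonalProjectionOnto_orthogonal,
    Submodule.starProjection_unit_singleton ℝ (v := EuclideanSpace.single i (1 : ℝ)) (by simp), hji]

noncomputable def cornerSimplex (n : ℕ) : Set (EuclideanSpace ℝ (Fin n)) :=
  convexHull ℝ (insert 0 (range fun i : Fin n => EuclideanSpace.single i (1 : ℝ)))

theorem zero_mem_cornerSimplex : (0 : EuclideanSpace ℝ (Fin n)) ∈ cornerSimplex n :=
  subset_convexHull ℝ _ (mem_insert _ _)

theorem single_mem_cornerSimplex (i : Fin n) :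
    EuclideanSpace.single i (1 : ℝ) ∈ cornerSimplex n :=
  subset_convexHull ℝ _ (mem_insert_of_mem _ ⟨i, rfl⟩)

theorem convex_cornerSimplex : Convex ℝ (cornerSimplex n) :=
  convex_convexHull ℝ _

theorem mem_cornerSimplex_iff {z : EuclideanSpace ℝ (Fin n)} :
    z ∈ cornerSimplex n ↔ (∀ j, 0 ≤ z j) ∧ ∑ j, z j ≤ 1 := by
  constructor
  · refine fun hz => convexHull_min
      (t := {z : EuclideanSpace ℝ (Fin n) | (∀ j, 0 ≤ z j) ∧ ∑ j, z j ≤ 1}) ?_ ?_ hz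
    · rintro _ (rfl | ⟨i, rfl⟩)
      · simp
      · simp [apply_ite]
    · intro a ha b hb s t hs ht hst
      simp only [mem_ofPred_eq, PiLp.add_apply, PiLp.smul_apply, smul_eq_mul,
        Finset.sum_add_distrib, ← Finset.mul_sum]
      refine ⟨fun j => add_nonneg (mul_nonneg hs (ha.1 j)) (mul_nonneg ht (hb.1 j)), ?_⟩
      nlinarith [ha.2, hb.2]
  · rintro ⟨hz₀, hz₁⟩
    rw [← (EuclideanSpace.basisFun (Fin n) ℝ).sum_repr z]
    simpa using convex_cornerSimplex.sum_smul_mem_of_zero_mem zero_mem_cornerSimplex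
      (fun j _ => hz₀ j) hz₁ (fun j _ => single_mem_cornerSimplex j)

theorem convexHull_cornerSimplex_union_subset_smul (hn : 1 < n) {p : EuclideanSpace ℝ (Fin n)}
    (hp : ∀ j, p j = 1 / ((n : ℝ) - 1)) :
    convexHull ℝ (cornerSimplex n ∪ {p}) ⊆ ((n : ℝ) / ((n : ℝ) - 1)) • cornerSimplex n := by
  have hn' : (1 : ℝ) < n := by exact_mod_cast hn
  have hc : 1 ≤ (n : ℝ) / ((n : ℝ) - 1) := by
    rw [le_div_iff₀ (by linarith)]; linarith
  refine convexHull_min (union_subset (fun x hx => ?_) ?_) (convex_cornerSimplex.smul _)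
  · exact convex_cornerSimplex.mem_smul_of_zero_mem zero_mem_cornerSimplex hx hc
  · -- `p` is the barycentre `(1/n, …, 1/n)` of the facet `∑ z = 1`, scaled by `n/(n-1)`
    rw [singleton_subset_iff]
    refine ⟨WithLp.toLp 2 fun _ => 1 / (n : ℝ),
      mem_cornerSimplex_iff.2 ⟨fun _ => by positivity, ?_⟩, ?_⟩
    · simp [Finset.sum_const, mul_inv_cancel₀ (by positivity : (n : ℝ) ≠ 0)]
    · ext j
      simp only [PiLp.smul_apply, smul_eq_mul, hp]
      field_simp

noncomputable def capRegion (n : ℕ) : Set (EuclideanSpace ℝ (Fin n)) :=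
  {z | (∀ j, 0 ≤ z j) ∧ ∀ i, ∑ j ∈ Finset.univ.erase i, z j ≤ 1}

theorem capRegion_subset_convexHull_cornerSimplex_union (hn : 1 < n)
    {p : EuclideanSpace ℝ (Fin n)} (hp : ∀ j, p j = 1 / ((n : ℝ) - 1)) :
    capRegion n ⊆ convexHull ℝ (cornerSimplex n ∪ {p}) := by
  rintro z ⟨hz₀, hz₁⟩
  have hn' : (1 : ℝ) < n := by exact_mod_cast hn
  set s := ∑ j, z j
  set t := max (s - 1) 0
  have hzt (j : Fin n) : t ≤ z j := by
    refine max_le ?_ (hz₀ j)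
    have := hz₁ j
    rw [Finset.sum_erase_eq_sub (Finset.mem_univ j)] at this
    linarith
  -- `z = ((n-1) t) • p + y` with `y = z - t • 𝟙 ≥ 0`, and the weights sum to `s - t ≤ 1`
  have key := (convex_convexHull ℝ (cornerSimplex n ∪ {p})).sum_smul_mem_of_zero_mem
    (subset_convexHull ℝ _ (Or.inl zero_mem_cornerSimplex)) (s := Finset.univ)
    (w := fun o : Option (Fin n) => o.elim (((n : ℝ) - 1) * t) fun j => z j - t)
    (v := fun o => o.elim p fun j => EuclideanSpace.single j 1) ?_ ?_ ?_
  · convert key using 1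
    ext j
    have : (n : ℝ) - 1 ≠ 0 := by linarith
    simp [Fintype.sum_option, hp, Pi.single_apply]
    field_simp
    ring
  · rintro (_ | j) -
    · exact mul_nonneg (by linarith) (le_max_right _ _)
    · exact sub_nonneg.2 (hzt j)
  · simp only [Fintype.sum_option, Option.elim_none, Option.elim_some, Finset.sum_sub_distrib,
      Finset.sum_const, Finset.card_univ, Fintype.card_fin, nsmul_eq_mul]
    linarith [le_max_left (s - 1) 0]
  · rintro (_ | j) -
    · exact subset_convexHull ℝ _ (Or.inr rfl)
    · exact subset_convexHull ℝ _ (Or.inl (single_mem_cornerSimplex j))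

theorem bounds_of_orthogonalProjectionOnto_add_mem_projSet_cornerSimplex {i : Fin n}
    {k w : EuclideanSpace ℝ (Fin n)}
    (h : ((ℝ ∙ EuclideanSpace.single i (1 : ℝ))ᗮ.orthogonalProjectionOnto k :
      EuclideanSpace ℝ (Fin n)) + w ∈ projSet (EuclideanSpace.single i (1 : ℝ)) (cornerSimplex n)) :
    (∀ j ≠ i, 0 ≤ k j + w j) ∧ ∑ j ∈ Finset.univ.erase i, (k j + w j) ≤ 1 := by
  obtain ⟨ξ, hξ, hξk⟩ := h
  have hcoord (j : Fin n) (hj : j ≠ i) : ξ j = k j + w j := by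
    simpa only [PiLp.add_apply, orthogonalProjectionOnto_orthogonal_single_apply_of_ne hj]
      using congrArg (· j) hξk
  obtain ⟨hξ₀, hξ₁⟩ := mem_cornerSimplex_iff.1 hξ
  refine ⟨fun j hj => hcoord j hj ▸ hξ₀ j, ?_⟩
  rw [← Finset.sum_congr rfl fun j hj => hcoord j (Finset.ne_of_mem_erase hj)]
  exact (Finset.sum_le_sum_of_subset_of_nonneg (Finset.erase_subset _ _)
    fun j _ _ => hξ₀ j).trans hξ₁

theorem add_iInf_mem_capRegion (hn : 2 ≤ n) {W : Fin n → EuclideanSpace ℝ (Fin n)}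
    {k : EuclideanSpace ℝ (Fin n)}
    (hW : ∀ i, (∀ j ≠ i, 0 ≤ k j + W i j) ∧ ∑ j ∈ Finset.univ.erase i, (k j + W i j) ≤ 1) :
    k + WithLp.toLp 2 (fun j => ⨅ i : {i // i ≠ j}, W i j) ∈ capRegion n := by
  have : Nontrivial (Fin n) := Fin.nontrivial_iff_two_le.2 hn
  have (j : Fin n) : Nonempty {i // i ≠ j} := nonempty_subtype.2 (exists_ne j)
  refine ⟨fun j => ?_, fun i => ?_⟩
  · have : -k j ≤ ⨅ i : {i // i ≠ j}, W i j :=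
      le_ciInf fun i => neg_le_iff_add_nonneg'.2 ((hW i).1 j i.2.symm)
    simp only [PiLp.add_apply]
    linarith
  · refine le_trans (Finset.sum_le_sum fun j hj => ?_) (hW i).2
    simp only [PiLp.add_apply]
    gcongr
    exact ciInf_le (Finite.bddBelow_range fun i : {i // i ≠ j} => W i j)
      ⟨i, (Finset.ne_of_mem_erase hj).symm⟩

end CornerSimplex

theorem hide_behind_standard_simplex_general {n : ℕ} (hn : 2 ≤ n)
    (Ξ D : Set (EuclideanSpace ℝ (Fin n))) (p : EuclideanSpace ℝ (Fin n))
    (hΞ : Ξ = convexHull ℝ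
      (insert (0 : EuclideanSpace ℝ (Fin n))
        (Set.range fun i : Fin n => EuclideanSpace.single i (1 : ℝ))))
    (hp : p = fun _ : Fin n => 1 / ((n : ℝ) - 1))
    (hD : D = convexHull ℝ (Ξ ∪ {p}))
    (K : Set (EuclideanSpace ℝ (Fin n)))
    (hcov : ∀ u : EuclideanSpace ℝ (Fin n), ‖u‖ = 1 →
      ∃ w ∈ (ℝ ∙ u)ᗮ, (fun y => y + w) '' projSet u K ⊆ projSet u Ξ) :
    (∃ x : EuclideanSpace ℝ (Fin n), (fun y => y + x) '' K ⊆ D) ∧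
      D ⊆ ((n : ℝ) / ((n : ℝ) - 1)) • Ξ := by
  change Ξ = cornerSimplex n at hΞ
  subst hΞ hD
  have hp' (j : Fin n) : p j = 1 / ((n : ℝ) - 1) := congrFun hp j
  refine ⟨?_, convexHull_cornerSimplex_union_subset_smul hn hp'⟩
  have hshadow (i : Fin n) : ∃ w : EuclideanSpace ℝ (Fin n), ∀ k ∈ K,
      (∀ j ≠ i, 0 ≤ k j + w j) ∧ ∑ j ∈ Finset.univ.erase i, (k j + w j) ≤ 1 := by
    obtain ⟨w, -, hw⟩ := hcov _ (by simp : ‖EuclideanSpace.single i (1 : ℝ)‖ = 1)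
    exact ⟨w, fun k hk => bounds_of_orthogonalProjectionOnto_add_mem_projSet_cornerSimplex
      (hw ⟨_, ⟨k, hk, rfl⟩, rfl⟩)⟩
  choose W hW using hshadow
  refine ⟨WithLp.toLp 2 fun j => ⨅ i : {i // i ≠ j}, W i j, ?_⟩
  rintro _ ⟨k, hk, rfl⟩
  exact capRegion_subset_convexHull_cornerSimplex_union hn hp'
    (add_iInf_mem_capRegion hn fun i => hW i k hk)

/-- if every shadow of the standard simplex `Ξ` (with vertices at the
origin and the standard basis vectors) contains a translate of the corresponding
shadow of `K`, then a translate of `K` lies in the cap body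
`D = conv(Ξ ∪ {p})`, where `p = (1/(n-1), …, 1/(n-1))`, and `D ⊆ (n/(n-1))·Ξ`. -/
theorem hide_behind_standard_simplex {n : ℕ} (hn : 2 ≤ n)
    (Ξ D : Set (EuclideanSpace ℝ (Fin n))) (p : EuclideanSpace ℝ (Fin n))
    (hΞ : Ξ = convexHull ℝ
      (insert (0 : EuclideanSpace ℝ (Fin n))
        (Set.range fun i : Fin n => EuclideanSpace.single i (1 : ℝ))))
    (hp : p = fun _ : Fin n => 1 / ((n : ℝ) - 1))
    (hD : D = convexHull ℝ (Ξ ∪ {p}))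
    (K : Set (EuclideanSpace ℝ (Fin n)))
    (hKne : K.Nonempty) (hKcpt : IsCompact K) (hKcv : Convex ℝ K)
    (hcov : ∀ u : EuclideanSpace ℝ (Fin n), ‖u‖ = 1 →
      ∃ w ∈ (ℝ ∙ u)ᗮ, (fun y => y + w) '' projSet u K ⊆ projSet u Ξ) :
    (∃ x : EuclideanSpace ℝ (Fin n), (fun y => y + x) '' K ⊆ D) ∧
      D ⊆ ((n : ℝ) / ((n : ℝ) - 1)) • Ξ :=
  hide_behind_standard_simplex_general hn Ξ D p hΞ hp hD K hcov
end

section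
/- Let K and L be nonempty compact convex sets in ℝⁿ and let d ∈ {1, …, n−1}. Suppose that for every (n−d)-dimensional linear subspace ξ ⊆ ℝⁿ, the orthogonal projection L_ξ of L onto ξ contains a translate of the corresponding projection K_ξ. Then there exists x ∈ ℝⁿ such that K + x ⊆ (n/(n−d))·L. -/
/-!
Write `m = n - d`, `c = n / m` and `h_L` for the support function of `L`. The translations `x`
with `y + x ∈ c • L` form a compact convex set for each `y ∈ K`, so by Helly's theorem it is
enough to treat `n + 1` points `y₀, …, yₙ` of `K`. If their sets had empty intersection,
separating the product of these sets from the diagonal would give `u₀, …, uₙ` with `∑ uᵢ = 0`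
and `c * ∑ h_L uᵢ < ∑ ⟪yᵢ, uᵢ⟫`.

On the other hand, any `m` of the `uᵢ` (`i ≥ 1`), indexed by `T`, span at most an
`m`-dimensional subspace, and the shadow hypothesis there gives
`∑_{i ∈ T} ⟪yᵢ - y₀, uᵢ⟫ ≤ h_L(-∑_{i ∈ T} uᵢ) + ∑_{i ∈ T} h_L uᵢ`: the unknown translate drops
out because the family `uᵢ (i ∈ T)`, `-∑_{i ∈ T} uᵢ` sums to zero. By subadditivity of `h_L`
the right side is at most `∑ h_L uᵢ`, and averaging over all `m`-subsets `T` of `{1, …, n}`, in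
which every index occurs with frequency `m / n`, gives `m * ∑ ⟪yᵢ, uᵢ⟫ ≤ n * ∑ h_L uᵢ`, a
contradiction.
-/

open Set MeasureTheory Pointwise

/-- Orthogonal projection of a set onto a linear subspace `ξ` of `ℝⁿ`,
viewed as a subset of the ambient space. -/
noncomputable def projSub {n : ℕ} (ξ : Submodule ℝ (EuclideanSpace ℝ (Fin n)))
    (K : Set (EuclideanSpace ℝ (Fin n))) : Set (EuclideanSpace ℝ (Fin n)) :=
  (fun x => (Submodule.orthogonalProjection ξ x : EuclideanSpace ℝ (Fin n))) '' K

open Finset Module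
open scoped RealInnerProductSpace

theorem Submodule.exists_le_finrank_eq {K V : Type*} [DivisionRing K] [AddCommGroup V]
    [Module K V] [Module.Finite K V] (p : Submodule K V) {m : ℕ} (hpm : finrank K p ≤ m)
    (hm : m ≤ finrank K V) : ∃ q : Submodule K V, p ≤ q ∧ finrank K q = m := by
  induction m, hpm using Nat.le_induction with
  | base => exact ⟨p, le_rfl, rfl⟩
  | succ m _ ih =>
    obtain ⟨q, hpq, hq⟩ := ih (by omega)
    obtain ⟨v, -, hv⟩ := SetLike.exists_of_lt (Submodule.lt_top_of_finrank_lt_finrank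
      (show finrank K q < finrank K V by omega))
    exact ⟨q ⊔ Submodule.span K {v}, hpq.trans le_sup_left,
      by rw [Submodule.finrank_sup_span_singleton hv, hq]⟩

theorem Finset.sum_powersetCard_sum {ι M : Type*} [DecidableEq ι] [AddCommMonoid M]
    (s : Finset ι) {m : ℕ} (hm : 1 ≤ m) (f : ι → M) :
    ∑ T ∈ s.powersetCard m, ∑ i ∈ T, f i = (#s - 1).choose (m - 1) • ∑ i ∈ s, f i := by
  have hcount : ∀ i ∈ s, #{T ∈ s.powersetCard m | i ∈ T} = (#s - 1).choose (m - 1) := by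
    intro i hi
    simpa using card_filter_powersetCard_subset {i} s m (by simpa using hi) (by simpa using hm)
  calc ∑ T ∈ s.powersetCard m, ∑ i ∈ T, f i
      = ∑ T ∈ s.powersetCard m, ∑ i ∈ s, if i ∈ T then f i else 0 := by
        refine sum_congr rfl fun T hT => ?_
        rw [sum_ite_mem, inter_eq_right.2 (mem_powersetCard.1 hT).1]
    _ = ∑ i ∈ s, #{T ∈ s.powersetCard m | i ∈ T} • f i := by
        rw [sum_comm]
        exact sum_congr rfl fun i _ => by rw [← sum_filter, sum_const]
    _ = (#s - 1).choose (m - 1) • ∑ i ∈ s, f i := by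
        rw [smul_sum]
        exact sum_congr rfl fun i hi => by rw [hcount i hi]

theorem exists_sum_eq_zero_of_iInter_eq_empty {ι V : Type*} [Fintype ι] [AddCommGroup V]
    [Module ℝ V] [TopologicalSpace V] [T2Space V] [IsTopologicalAddGroup V] [ContinuousSMul ℝ V]
    [LocallyConvexSpace ℝ V] {C : ι → Set V} (hconv : ∀ i, Convex ℝ (C i))
    (hcpt : ∀ i, IsCompact (C i)) (h : ⋂ i, C i = ∅) :
    ∃ f : ι → StrongDual ℝ V, ∑ i, f i = 0 ∧
      ∀ c : ι → V, (∀ i, c i ∈ C i) → ∑ i, f i (c i) < 0 := by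
  classical
  obtain ⟨i₀⟩ : Nonempty ι := by
    by_contra hι
    simp [not_nonempty_iff.1 hι] at h
  set D : Set (ι → V) := {p | ∀ i, p i = p i₀}
  have hD_conv : Convex ℝ D := by
    intro p hp q hq a b _ _ _ i
    simp [hp i, hq i]
  have hD_closed : IsClosed D := by
    simp only [D, ofPred_forall]
    exact isClosed_iInter fun i => isClosed_eq (continuous_apply i) (continuous_apply i₀)
  have hdisj : Disjoint (univ.pi C) D := by
    refine Set.disjoint_left.2 fun p hpC hpD => ?_
    have : p i₀ ∈ ⋂ i, C i := mem_iInter.2 fun i => hpD i ▸ hpC i (mem_univ i)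
    simp [h] at this
  obtain ⟨g, a, b, hga, hab, hgb⟩ := geometric_hahn_banach_compact_closed
    (convex_pi fun i _ => hconv i) (isCompact_univ_pi hcpt) hD_conv hD_closed hdisj
  -- `g` is bounded below on the subspace `D`, hence vanishes on it.
  have hg_const : ∀ x : V, g (fun _ => x) = 0 := by
    intro x
    by_contra hx
    have := hgb (((b - 1) / g fun _ => x) • fun _ => x) fun _ => rfl
    rw [map_smul, smul_eq_mul, div_mul_cancel₀ _ hx] at this
    linarith
  have hg_sum : ∀ p : ι → V, g p = ∑ i, g (Pi.single i (p i)) := by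
    intro p
    conv_lhs => rw [← Finset.univ_sum_single p]
    rw [map_sum]
  refine ⟨fun i => g.comp (ContinuousLinearMap.single ℝ (fun _ => V) i), ?_, fun c hc => ?_⟩
  · ext x
    simpa [hg_const] using (hg_sum fun _ => x).symm
  · have h0 : g 0 = 0 := map_zero g
    have := hgb 0 fun _ => rfl
    have := hga c fun i _ => hc i
    simp only [ContinuousLinearMap.comp_apply, ContinuousLinearMap.single_apply]
    rw [← hg_sum]
    linarith

theorem Convex.helly_theorem_compact_of_forall_fin {ι 𝕜 V : Type*} [Field 𝕜] [LinearOrder 𝕜]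
    [IsStrictOrderedRing 𝕜] [AddCommGroup V] [Module 𝕜 V] [FiniteDimensional 𝕜 V]
    [TopologicalSpace V] [T2Space V] {F : ι → Set V} (h_convex : ∀ i, Convex 𝕜 (F i))
    (h_compact : ∀ i, IsCompact (F i))
    (h_inter : ∀ p : Fin (finrank 𝕜 V + 1) → ι, (⋂ j, F (p j)).Nonempty) :
    (⋂ i, F i).Nonempty := by
  refine Convex.helly_theorem_compact' h_convex h_compact fun I hI => ?_
  obtain rfl | ⟨i₀, hi₀⟩ := I.eq_empty_or_nonempty
  · simp
  have : Nonempty I := ⟨⟨i₀, hi₀⟩⟩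
  obtain ⟨e⟩ : Nonempty (I ↪ Fin (finrank 𝕜 V + 1)) :=
    Function.Embedding.nonempty_of_card_le (by simpa using hI)
  obtain ⟨x, hx⟩ := h_inter fun j => (Function.invFun (⇑e) j : I)
  refine ⟨x, mem_iInter₂.2 fun i hi => ?_⟩
  simpa [Function.leftInverse_invFun e.injective ⟨i, hi⟩] using mem_iInter.1 hx (e ⟨i, hi⟩)

noncomputable def supportFunction {V : Type*} [NormedAddCommGroup V] [InnerProductSpace ℝ V]
    (K : Set V) (u : V) : ℝ :=
  sSup ((⟪·, u⟫) '' K)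

section SupportFunction

variable {V : Type*} [NormedAddCommGroup V] [InnerProductSpace ℝ V] {K : Set V}

theorem inner_le_supportFunction (hK : IsCompact K) {x : V} (hx : x ∈ K) (u : V) :
    ⟪x, u⟫ ≤ supportFunction K u :=
  le_csSup (hK.image (continuous_id.inner continuous_const)).bddAbove ⟨x, hx, rfl⟩

theorem exists_inner_eq_supportFunction (hne : K.Nonempty) (hK : IsCompact K) (u : V) :
    ∃ x ∈ K, ⟪x, u⟫ = supportFunction K u :=
  (hK.image (continuous_id.inner continuous_const)).sSup_mem (hne.image _)

theorem supportFunction_zero (hne : K.Nonempty) : supportFunction K 0 = 0 := by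
  simp [supportFunction, hne.image_const]

theorem supportFunction_add_le (hne : K.Nonempty) (hK : IsCompact K) (u v : V) :
    supportFunction K (u + v) ≤ supportFunction K u + supportFunction K v := by
  obtain ⟨x, hx, hxuv⟩ := exists_inner_eq_supportFunction hne hK (u + v)
  rw [← hxuv, inner_add_right]
  exact add_le_add (inner_le_supportFunction hK hx u) (inner_le_supportFunction hK hx v)

theorem supportFunction_sum_le (hne : K.Nonempty) (hK : IsCompact K) {ι : Type*}
    (s : Finset ι) (u : ι → V) :
    supportFunction K (∑ i ∈ s, u i) ≤ ∑ i ∈ s, supportFunction K (u i) := by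
  classical
  induction s using Finset.induction_on with
  | empty => simp [supportFunction_zero hne]
  | insert i s hi ih =>
    rw [sum_insert hi, sum_insert hi]
    exact (supportFunction_add_le hne hK _ _).trans (by linarith)

theorem supportFunction_neg_sum_add_sum_le (hne : K.Nonempty) (hK : IsCompact K) {ι : Type*}
    [DecidableEq ι] {s T : Finset ι} (hTs : T ⊆ s) (u : ι → V) :
    supportFunction K (-∑ i ∈ T, u i) + ∑ i ∈ T, supportFunction K (u i)
      ≤ supportFunction K (-∑ i ∈ s, u i) + ∑ i ∈ s, supportFunction K (u i) := by
  have hsplit : -∑ i ∈ T, u i = -∑ i ∈ s, u i + ∑ i ∈ s \ T, u i := by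
    rw [← sum_sdiff hTs]
    abel
  have := sum_sdiff hTs (f := fun i => supportFunction K (u i))
  rw [hsplit]
  linarith [supportFunction_add_le hne hK (-∑ i ∈ s, u i) (∑ i ∈ s \ T, u i),
    supportFunction_sum_le hne hK (s \ T) u]

end SupportFunction

section Shadows

variable {n : ℕ}

def ShadowsContainTranslates (K L : Set (EuclideanSpace ℝ (Fin n))) (m : ℕ) : Prop :=
  ∀ ξ : Submodule ℝ (EuclideanSpace ℝ (Fin n)), finrank ℝ ξ = m →
    ∃ w ∈ ξ, (fun y => y + w) '' projSub ξ K ⊆ projSub ξ L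

variable {K L : Set (EuclideanSpace ℝ (Fin n))} {m : ℕ}

theorem inner_add_inner_le_supportFunction (hL : IsCompact L)
    {ξ : Submodule ℝ (EuclideanSpace ℝ (Fin n))} {w : EuclideanSpace ℝ (Fin n)}
    (h : (fun y => y + w) '' projSub ξ K ⊆ projSub ξ L) {k u : EuclideanSpace ℝ (Fin n)}
    (hk : k ∈ K) (hu : u ∈ ξ) : ⟪k, u⟫ + ⟪w, u⟫ ≤ supportFunction L u := by
  obtain ⟨l, hl, hlk⟩ := h ⟨_, ⟨k, hk, rfl⟩, rfl⟩
  have hproj (x : EuclideanSpace ℝ (Fin n)) :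
      ⟪(ξ.orthogonalProjectionOnto x : EuclideanSpace ℝ (Fin n)), u⟫ = ⟪x, u⟫ :=
    Submodule.inner_orthogonalProjectionOnto_eq_of_mem_right ⟨u, hu⟩ x
  calc ⟪k, u⟫ + ⟪w, u⟫ = ⟪(ξ.orthogonalProjectionOnto k : EuclideanSpace ℝ (Fin n)) + w, u⟫ := by
        rw [inner_add_left, hproj]
    _ = ⟪l, u⟫ := by rw [← hproj l]; exact congrArg (⟪·, u⟫) hlk.symm
    _ ≤ supportFunction L u := inner_le_supportFunction hL hl u

theorem sum_inner_sub_le_of_card_le (hcov : ShadowsContainTranslates K L m) (hL : IsCompact L)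
    (hmn : m ≤ n) {ι : Type*} (T : Finset ι) (hT : #T ≤ m) (w k : ι → EuclideanSpace ℝ (Fin n))
    {k₀ : EuclideanSpace ℝ (Fin n)} (hk₀ : k₀ ∈ K) (hk : ∀ i ∈ T, k i ∈ K) :
    ∑ i ∈ T, ⟪k i - k₀, w i⟫
      ≤ supportFunction L (-∑ i ∈ T, w i) + ∑ i ∈ T, supportFunction L (w i) := by
  classical
  obtain ⟨ξ, hwξ, hξ⟩ :=
    (Submodule.span ℝ (T.image w : Set (EuclideanSpace ℝ (Fin n)))).exists_le_finrank_eq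
      ((finrank_span_finset_le_card _).trans (card_image_le.trans hT))
      (finrank_euclideanSpace_fin (𝕜 := ℝ) ▸ hmn)
  obtain ⟨t, -, ht⟩ := hcov ξ hξ
  have hw : ∀ i ∈ T, w i ∈ ξ := fun i hi =>
    hwξ (Submodule.subset_span (mem_coe.2 (mem_image_of_mem w hi)))
  have h₀ := inner_add_inner_le_supportFunction hL ht hk₀ (ξ.neg_mem (ξ.sum_mem hw))
  have hsum := sum_le_sum fun i hi =>
    inner_add_inner_le_supportFunction hL ht (hk i hi) (hw i hi)
  have hk_sum : ∑ i ∈ T, ⟪k i - k₀, w i⟫ = ∑ i ∈ T, ⟪k i, w i⟫ + ⟪k₀, -∑ i ∈ T, w i⟫ := by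
    simp only [inner_sub_left, sum_sub_distrib, inner_neg_right, inner_sum]
    ring
  have ht_sum : ∑ i ∈ T, ⟪t, w i⟫ + ⟪t, -∑ i ∈ T, w i⟫ = 0 := by
    rw [inner_neg_right, inner_sum]
    ring
  rw [sum_add_distrib] at hsum
  linarith

theorem mul_sum_inner_sub_le (hcov : ShadowsContainTranslates K L m) (hLne : L.Nonempty)
    (hL : IsCompact L) (hm : 1 ≤ m) (hmn : m ≤ n) {ι : Type*} [DecidableEq ι] (s : Finset ι)
    (hs : #s = n) (w k : ι → EuclideanSpace ℝ (Fin n)) {k₀ : EuclideanSpace ℝ (Fin n)}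
    (hk₀ : k₀ ∈ K) (hk : ∀ i ∈ s, k i ∈ K) :
    m * ∑ i ∈ s, ⟪k i - k₀, w i⟫
      ≤ n * (supportFunction L (-∑ i ∈ s, w i) + ∑ i ∈ s, supportFunction L (w i)) := by
  set F := s.powersetCard m
  set Φ := supportFunction L (-∑ i ∈ s, w i) + ∑ i ∈ s, supportFunction L (w i)
  set r := (n - 1).choose (m - 1)
  have hr : (0 : ℝ) < r := by exact_mod_cast Nat.choose_pos (by omega)
  -- Double counting the incidences `i ∈ T`: every `T ∈ F` has `m` elements.
  have hF : (#F * m : ℝ) = r * n := by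
    have := s.sum_powersetCard_sum hm fun _ => (1 : ℕ)
    simp only [← card_eq_sum_ones, hs, smul_eq_mul] at this
    rw [sum_congr rfl fun T hT => (mem_powersetCard.1 hT).2, sum_const, smul_eq_mul] at this
    exact_mod_cast this
  have hrF : r * ∑ i ∈ s, ⟪k i - k₀, w i⟫ ≤ #F * Φ := calc
    r * ∑ i ∈ s, ⟪k i - k₀, w i⟫ = ∑ T ∈ F, ∑ i ∈ T, ⟪k i - k₀, w i⟫ := by
      rw [s.sum_powersetCard_sum hm, hs, nsmul_eq_mul]
    _ ≤ ∑ T ∈ F, Φ := sum_le_sum fun T hT =>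
      have ⟨hTs, hTm⟩ := mem_powersetCard.1 hT
      (sum_inner_sub_le_of_card_le hcov hL hmn T hTm.le w k hk₀ fun i hi => hk i (hTs hi)).trans
        (supportFunction_neg_sum_add_sum_le hLne hL hTs w)
    _ = #F * Φ := by rw [sum_const, nsmul_eq_mul]
  refine le_of_mul_le_mul_left ?_ hr
  calc r * (m * ∑ i ∈ s, ⟪k i - k₀, w i⟫) = m * (r * ∑ i ∈ s, ⟪k i - k₀, w i⟫) := by ring
    _ ≤ m * (#F * Φ) := mul_le_mul_of_nonneg_left hrF (Nat.cast_nonneg m)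
    _ = r * (n * Φ) := by linear_combination Φ * hF

theorem mul_sum_inner_le_of_sum_eq_zero (hcov : ShadowsContainTranslates K L m)
    (hLne : L.Nonempty) (hL : IsCompact L) (hm : 1 ≤ m) (hmn : m ≤ n) {ι : Type*} [Fintype ι]
    (hι : Fintype.card ι = n + 1) (u k : ι → EuclideanSpace ℝ (Fin n)) (hu : ∑ i, u i = 0)
    (hk : ∀ i, k i ∈ K) :
    m * ∑ i, ⟪k i, u i⟫ ≤ n * ∑ i, supportFunction L (u i) := by
  classical
  obtain ⟨i₀⟩ : Nonempty ι := Fintype.card_pos_iff.1 (by omega)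
  have hu₀ : u i₀ = -∑ i ∈ univ.erase i₀, u i := by
    rw [eq_neg_iff_add_eq_zero, add_sum_erase _ _ (mem_univ i₀), hu]
  have key := mul_sum_inner_sub_le hcov hLne hL hm hmn (univ.erase i₀)
    (by rw [card_erase_of_mem (mem_univ i₀), card_univ, hι, Nat.add_sub_cancel]) u k (hk i₀)
    fun i _ => hk i
  rw [← hu₀, add_sum_erase _ (fun i => supportFunction L (u i)) (mem_univ i₀)] at key
  have hsplit : ∑ i ∈ univ.erase i₀, ⟪k i - k i₀, u i⟫ = ∑ i, ⟪k i, u i⟫ := by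
    rw [← add_sum_erase _ _ (mem_univ i₀), hu₀]
    simp only [inner_sub_left, sum_sub_distrib, inner_neg_right, inner_sum]
    ring
  rwa [hsplit] at key

theorem iInter_preimage_add_smul_nonempty (hcov : ShadowsContainTranslates K L m)
    (hLne : L.Nonempty) (hL : IsCompact L) (hLcv : Convex ℝ L) (hm : 1 ≤ m) (hmn : m ≤ n)
    {ι : Type*} [Fintype ι] (hι : Fintype.card ι = n + 1) (p : ι → EuclideanSpace ℝ (Fin n))
    (hp : ∀ i, p i ∈ K) : (⋂ i, (p i + ·) ⁻¹' ((n / m : ℝ) • L)).Nonempty := by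
  by_contra hempty
  obtain ⟨f, hf, hneg⟩ := exists_sum_eq_zero_of_iInter_eq_empty
    (fun i => (hLcv.smul _).translate_preimage_right (p i))
    (fun i => (Homeomorph.addLeft (p i)).isCompact_preimage.2 (hL.smul _))
    (not_nonempty_iff_eq_empty.1 hempty)
  set u := fun i => (InnerProductSpace.toDual ℝ _).symm (f i)
  have hu : ∑ i, u i = 0 := by simp [u, ← map_sum, hf]
  choose l hl hlu using fun i => exists_inner_eq_supportFunction hLne hL (u i)
  have hlt := hneg (fun i => (n / m : ℝ) • l i - p i) fun i => by
    rw [Set.mem_preimage, add_sub_cancel]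
    exact smul_mem_smul_set (hl i)
  have hfu : ∀ i x, f i x = ⟪x, u i⟫ := fun i x => by
    rw [real_inner_comm]; exact InnerProductSpace.toDual_symm_apply.symm
  simp only [hfu, inner_sub_left, real_inner_smul_left, hlu, sum_sub_distrib, ← mul_sum] at hlt
  have hle := mul_sum_inner_le_of_sum_eq_zero hcov hLne hL hm hmn hι u p hu hp
  have hmpos : (0 : ℝ) < m := by exact_mod_cast hm
  rw [sub_neg, div_mul_eq_mul_div, div_lt_iff₀ hmpos] at hlt
  linarith

theorem exists_forall_add_mem_smul (hcov : ShadowsContainTranslates K L m) (hLne : L.Nonempty)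
    (hL : IsCompact L) (hLcv : Convex ℝ L) (hm : 1 ≤ m) (hmn : m ≤ n) :
    ∃ x : EuclideanSpace ℝ (Fin n), ∀ y ∈ K, y + x ∈ (n / m : ℝ) • L := by
  obtain ⟨x, hx⟩ := Convex.helly_theorem_compact_of_forall_fin (𝕜 := ℝ)
    (F := fun y : K => ((y : EuclideanSpace ℝ (Fin n)) + ·) ⁻¹' ((n / m : ℝ) • L))
    (fun y => (hLcv.smul _).translate_preimage_right _)
    (fun y => (Homeomorph.addLeft _).isCompact_preimage.2 (hL.smul _))
    fun p => iInter_preimage_add_smul_nonempty hcov hLne hL hLcv hm hmn (by simp)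
      (fun j => p j) fun j => (p j).2
  exact ⟨x, fun y hy => mem_iInter.1 hx ⟨y, hy⟩⟩

end Shadows

theorem shadow_covering_containment_codim_general {n d : ℕ} (hdn : d < n)
    (K L : Set (EuclideanSpace ℝ (Fin n)))
    (hLne : L.Nonempty) (hLcpt : IsCompact L) (hLcv : Convex ℝ L)
    (hcov : ∀ ξ : Submodule ℝ (EuclideanSpace ℝ (Fin n)),
      Module.finrank ℝ ξ = n - d →
      ∃ w ∈ ξ, (fun y => y + w) '' projSub ξ K ⊆ projSub ξ L) :
    ∃ x : EuclideanSpace ℝ (Fin n),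
      (fun y => y + x) '' K ⊆ ((n : ℝ) / ((n : ℝ) - (d : ℝ))) • L := by
  obtain ⟨x, hx⟩ := exists_forall_add_mem_smul hcov hLne hLcpt hLcv (by omega) (Nat.sub_le n d)
  refine ⟨x, ?_⟩
  rintro _ ⟨y, hy, rfl⟩
  simpa [Nat.cast_sub hdn.le] using hx y hy

/-- if every `(n-d)`-dimensional shadow of `L` contains a translate of
the corresponding shadow of `K`, then a translate of `K` lies in `(n/(n-d)) • L`. -/
theorem shadow_covering_containment_codim {n d : ℕ} (hd1 : 1 ≤ d) (hdn : d < n)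
    (K L : Set (EuclideanSpace ℝ (Fin n)))
    (hKne : K.Nonempty) (hKcpt : IsCompact K) (hKcv : Convex ℝ K)
    (hLne : L.Nonempty) (hLcpt : IsCompact L) (hLcv : Convex ℝ L)
    (hcov : ∀ ξ : Submodule ℝ (EuclideanSpace ℝ (Fin n)),
      Module.finrank ℝ ξ = n - d →
      ∃ w ∈ ξ, (fun y => y + w) '' projSub ξ K ⊆ projSub ξ L) :
    ∃ x : EuclideanSpace ℝ (Fin n),
      (fun y => y + x) '' K ⊆ ((n : ℝ) / ((n : ℝ) - (d : ℝ))) • L :=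
  shadow_covering_containment_codim_general hdn K L hLne hLcpt hLcv hcov
end
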